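/- arXiv:2112.03391 — 3 statements merged into one kernel-verified Lean document; each statement's English description precedes it below -/
import Mathlib

section
/- For every real x with |x| ≤ 1, the squared midpoint projection increment satisfies the two-sided bound x² ≤ (2·arcsin(x/2))² ≤ x² + x⁴/4. -/
open Real

lemma aux_midpoint (x : ℝ) (h0 : 0 ≤ x) (h1 : x ≤ 1) :
    x ^ 2 ≤ (2 * Real.arcsin (x / 2)) ^ 2 ∧
      (2 * Real.arcsin (x / 2)) ^ 2 ≤ x ^ 2 + x ^ 4 / 4 := by
  rcases eq_or_lt_of_le h0 with rfl | hx0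
  · simp
  set y := x / 2 with hy
  have hy0 : 0 < y := by positivity
  have hy1 : y ≤ 1/2 := by rw [hy]; linarith
  set t := Real.arcsin y with htdef
  have ht0 : 0 < t := Real.arcsin_pos.2 hy0
  have hsin : Real.sin t = y := Real.sin_arcsin (by linarith) (by linarith)
  -- bound t ≤ 0.6
  have hsin06 : (0.6 : ℝ) - (0.6:ℝ) ^ 3 / 4 < Real.sin 0.6 :=
    by have h := Real.sin_gt_sub_cube (show (0:ℝ) < 0.6 by norm_num); linarith [h, show (0.6:ℝ) ^ 3 / 6 ≤ (0.6:ℝ) ^ 3 / 4 by norm_num]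
  have ht06 : t ≤ 0.6 := by
    have hA : t = Real.arcsin (Real.sin t) :=
      (Real.arcsin_sin (Real.neg_pi_div_two_le_arcsin y) (Real.arcsin_le_pi_div_two y)).symm
    have hB : (0.6 : ℝ) = Real.arcsin (Real.sin 0.6) :=
      (Real.arcsin_sin (by linarith [Real.pi_gt_three]) (by linarith [Real.pi_gt_three])).symm
    rw [hA, hB]
    exact Real.monotone_arcsin (by rw [hsin]; nlinarith)
  constructor
  · -- lower bound: y = sin t ≤ t
    have hyt : y ≤ t := hsin ▸ Real.sin_le ht0.le
    have : x ≤ 2 * t := by rw [hy] at hyt; linarith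
    nlinarith
  · -- upper bound: t^2 ≤ y^2 + y^4
    have hcube : t - t ^ 3 / 4 < y := by have h := Real.sin_gt_sub_cube ht0; rw [hsin] at h; linarith [pow_pos ht0 3]
    have hu : t ^ 2 ≤ 0.36 := by nlinarith
    have hs0 : (0:ℝ) ≤ t - t ^ 3 / 4 := by nlinarith [mul_nonneg ht0.le (show (0:ℝ) ≤ 1 - t ^ 2 / 4 by nlinarith)]
    have h2 : (t - t ^ 3 / 4) ^ 2 ≤ y ^ 2 := by nlinarith
    have h4 : (t - t ^ 3 / 4) ^ 4 ≤ y ^ 4 := by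
      calc (t - t ^ 3 / 4) ^ 4 = ((t - t ^ 3 / 4) ^ 2) ^ 2 := by ring
        _ ≤ (y ^ 2) ^ 2 := by nlinarith [sq_nonneg (t - t ^ 3 / 4)]
        _ = y ^ 4 := by ring
    have hg : (0:ℝ) ≤ (1 - t ^ 2 / 4) ^ 4 - 1 / 2 + t ^ 2 / 16 := by
      nlinarith [hu, sq_nonneg t, sq_nonneg (t ^ 2), sq_nonneg (t ^ 4),
        mul_nonneg (mul_nonneg (sq_nonneg t) (sq_nonneg t)) (show (0:ℝ) ≤ 6 - t ^ 2 by nlinarith)]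
    have hprod : (0:ℝ) ≤ t ^ 4 * ((1 - t ^ 2 / 4) ^ 4 - 1 / 2 + t ^ 2 / 16) :=
      mul_nonneg (by positivity) hg
    have He : (t - t ^ 3 / 4) ^ 2 + (t - t ^ 3 / 4) ^ 4 - t ^ 2
        = t ^ 4 * ((1 - t ^ 2 / 4) ^ 4 - 1 / 2 + t ^ 2 / 16) := by ring
    have key : t ^ 2 ≤ y ^ 2 + y ^ 4 := by linarith
    have e2 : x ^ 2 = 4 * y ^ 2 := by rw [hy]; ring
    have e4 : x ^ 4 = 16 * y ^ 4 := by rw [hy]; ring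
    have e0 : (2 * t) ^ 2 = 4 * t ^ 2 := by ring
    linarith

/-- Two-sided bound for the squared midpoint projection increment:
`x² ≤ (2 arcsin(x/2))² ≤ x² + x⁴/4` for every real `x` with `|x| ≤ 1`. -/
theorem sq_midpoint_increment_two_sided_bound (x : ℝ) (hx : |x| ≤ 1) :
    x ^ 2 ≤ (2 * Real.arcsin (x / 2)) ^ 2 ∧
      (2 * Real.arcsin (x / 2)) ^ 2 ≤ x ^ 2 + x ^ 4 / 4 := by
  rcases le_or_gt 0 x with h | h
  · exact aux_midpoint x h (by rwa [abs_of_nonneg h] at hx)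
  · have := aux_midpoint (-x) (by linarith) (by rwa [abs_of_neg h] at hx)
    have hneg : Real.arcsin (-x / 2) = -Real.arcsin (x / 2) := by
      rw [show -x / 2 = -(x/2) by ring, Real.arcsin_neg]
    rw [hneg] at this
    obtain ⟨a, b⟩ := this
    have ea : (-x) ^ 2 = x ^ 2 := by ring
    have eb : (-x) ^ 4 = x ^ 4 := by ring
    have ec : (2 * -Real.arcsin (x / 2)) ^ 2 = (2 * Real.arcsin (x / 2)) ^ 2 := by ring
    rw [ea, ec] at a
    rw [ec, ea, eb] at b
    exact ⟨a, b⟩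
end

section
/- Let b ∈ ℝ and Δt ≥ 0, and let γ be the Gaussian probability measure on ℝ with mean 0 and variance Δt. Then the mean-squared angular displacement of a single Euler-projected diffusion step on the unit circle satisfies b²Δt − 2b⁴Δt² ≤ ∫ (arctan(b w))² dγ(w) ≤ b²Δt. In particular the local error of ⟨Δθ_E²⟩ relative to the exact value b²Δt is at most 2b⁴Δt². -/
open MeasureTheory ProbabilityTheory
open scoped NNReal ENNReal

namespace EulerProjAux

open Real Filter Set

lemma arctan_nonneg' {x : ℝ} (hx : 0 ≤ x) : 0 ≤ Real.arctan x := by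
  rcases hx.eq_or_lt with rfl | h
  · simp
  · exact le_of_lt (by simpa using Real.arctan_strictMono h)

lemma arctan_le_self' {x : ℝ} (hx : 0 ≤ x) : Real.arctan x ≤ x := by
  have hmono : Monotone (fun t : ℝ => t - Real.arctan t) := by
    apply monotone_of_deriv_nonneg
    · exact differentiable_id.sub Real.differentiable_arctan
    · intro t
      have h : HasDerivAt (fun t : ℝ => t - Real.arctan t)
          (1 - 1 / (1 + t ^ 2)) t := (hasDerivAt_id t).sub (Real.hasDerivAt_arctan t)
      rw [h.deriv]
      have h1 : (0:ℝ) < 1 + t ^ 2 := by positivity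
      have h2 : 1 / (1 + t ^ 2) ≤ 1 := by
        rw [div_le_one h1]; nlinarith [sq_nonneg t]
      linarith
  have := hmono hx
  simp only [Real.arctan_zero, sub_zero] at this
  linarith

lemma self_sub_cube_le_arctan {x : ℝ} (hx : 0 ≤ x) :
    x - x ^ 3 / 3 ≤ Real.arctan x := by
  have hmono : Monotone (fun t : ℝ => Real.arctan t - t + t ^ 3 / 3) := by
    apply monotone_of_deriv_nonneg
    · exact (Real.differentiable_arctan.sub differentiable_id).add
        ((differentiable_pow 3).div_const 3)
    · intro t
      have h : HasDerivAt (fun t : ℝ => Real.arctan t - t + t ^ 3 / 3)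
          (t ^ 4 / (1 + t ^ 2)) t := by
        have h0 : HasDerivAt (fun t : ℝ => Real.arctan t - t + t ^ 3 / 3)
            (1 / (1 + t ^ 2) - 1 + (3 : ℕ) * t ^ 2 / 3) t := by
          have := ((Real.hasDerivAt_arctan t).sub (hasDerivAt_id t)).add
            ((hasDerivAt_pow 3 t).div_const 3)
          simp at this ⊢
          exact this
        convert h0 using 1
        have h1 : (0:ℝ) < 1 + t ^ 2 := by positivity
        field_simp
        ring
      rw [h.deriv]
      positivity
  have := hmono hx
  simp only [Real.arctan_zero, Real.arctan_zero] at this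
  norm_num at this
  linarith

lemma arctan_sq_le (x : ℝ) : Real.arctan x ^ 2 ≤ x ^ 2 := by
  rcases le_total 0 x with h | h
  · nlinarith [arctan_le_self' h, arctan_nonneg' h]
  · have h' : 0 ≤ -x := by linarith
    have h1 := arctan_le_self' h'
    have h2 := arctan_nonneg' h'
    rw [Real.arctan_neg] at h1 h2
    nlinarith

lemma sq_sub_arctan_sq_le (x : ℝ) :
    x ^ 2 - Real.arctan x ^ 2 ≤ 2 / 3 * x ^ 4 := by
  have key : ∀ y : ℝ, 0 ≤ y → y ^ 2 - Real.arctan y ^ 2 ≤ 2 / 3 * y ^ 4 := by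
    intro y hy
    have h1 := arctan_le_self' hy
    have h2 := arctan_nonneg' hy
    have h3 := self_sub_cube_le_arctan hy
    have h4 : (y - Real.arctan y) * (y + Real.arctan y) ≤ y ^ 3 / 3 * (2 * y) := by
      apply mul_le_mul (by linarith) (by linarith) (by linarith) (by positivity)
    nlinarith
  rcases le_total 0 x with h | h
  · exact key x h
  · have h' : 0 ≤ -x := by linarith
    have := key (-x) h'
    rw [Real.arctan_neg] at this
    nlinarith

section GaussMoments

variable {c : ℝ}

lemma integrable_pow_mul_gauss (hc : 0 < c) (n : ℕ) :
    Integrable fun x : ℝ => x ^ n * Real.exp (-c * x ^ 2) := by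
  have hn : (-1 : ℝ) < (n : ℝ) := lt_of_lt_of_le (by norm_num) (Nat.cast_nonneg n)
  have := integrable_rpow_mul_exp_neg_mul_sq hc hn
  simpa [Real.rpow_natCast] using this

lemma moment_rec (hc : 0 < c) (n : ℕ) :
    ∫ x : ℝ, x ^ (n + 2) * Real.exp (-c * x ^ 2) =
      (n + 1) / (2 * c) * ∫ x : ℝ, x ^ n * Real.exp (-c * x ^ 2) := by
  have key : ∫ x : ℝ, ((n + 1 : ℝ) * (x ^ n * Real.exp (-c * x ^ 2))
      - 2 * c * (x ^ (n + 2) * Real.exp (-c * x ^ 2))) = 0 := by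
    apply integral_eq_zero_of_hasDerivAt_of_integrable
      (f := fun x : ℝ => x ^ (n + 1) * Real.exp (-c * x ^ 2))
    · intro x
      have h1 : HasDerivAt (fun x : ℝ => -c * x ^ 2) (-c * (2 * x)) x := by
        simpa using (hasDerivAt_pow 2 x).const_mul (-c)
      have h2 := h1.exp
      have h3 := (hasDerivAt_pow (n + 1) x).mul h2
      convert h3 using 1
      · rfl
      · rfl
      push_cast
      ring
    · exact ((integrable_pow_mul_gauss hc n).const_mul _).sub
        ((integrable_pow_mul_gauss hc (n + 2)).const_mul _)
    · exact integrable_pow_mul_gauss hc (n + 1)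
  rw [integral_sub (((integrable_pow_mul_gauss hc n).const_mul _))
      ((integrable_pow_mul_gauss hc (n + 2)).const_mul _),
    integral_const_mul, integral_const_mul, sub_eq_zero] at key
  have hc' : (2 : ℝ) * c ≠ 0 := by positivity
  rw [div_mul_eq_mul_div, eq_div_iff hc']
  linear_combination -key

lemma moment_two (hc : 0 < c) :
    ∫ x : ℝ, x ^ 2 * Real.exp (-c * x ^ 2) = 1 / (2 * c) * Real.sqrt (π / c) := by
  have h := moment_rec hc 0
  simp only [pow_zero, one_mul, Nat.cast_zero, zero_add] at h
  rw [h, integral_gaussian]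

lemma moment_four (hc : 0 < c) :
    ∫ x : ℝ, x ^ 4 * Real.exp (-c * x ^ 2)
      = 3 / (2 * c) * (1 / (2 * c) * Real.sqrt (π / c)) := by
  rw [moment_rec hc 2, moment_two hc]
  push_cast
  ring

end GaussMoments

section GaussianRealMoments

variable {v : ℝ≥0}

lemma integral_gaussianReal_eq (hv : v ≠ 0) (g : ℝ → ℝ) :
    ∫ x, g x ∂(gaussianReal 0 v) = ∫ x, gaussianPDFReal 0 v x * g x := by
  rw [gaussianReal_of_var_ne_zero _ hv]
  have hmeas : Measurable fun x => (gaussianPDFReal 0 v x).toNNReal :=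
    (measurable_gaussianPDFReal 0 v).real_toNNReal
  have heq : (gaussianPDF 0 v)
      = fun x => ((fun x => (gaussianPDFReal 0 v x).toNNReal) x : ℝ≥0∞) := rfl
  rw [heq, integral_withDensity_eq_integral_smul hmeas g]
  congr 1
  ext x
  simp [NNReal.smul_def, Real.coe_toNNReal _ (gaussianPDFReal_nonneg 0 v x)]

lemma gaussianPDFReal_eq (x : ℝ) :
    gaussianPDFReal 0 v x
      = (Real.sqrt (2 * π * v))⁻¹ * Real.exp (-(2 * (v : ℝ))⁻¹ * x ^ 2) := by
  have harg : -(x - 0) ^ 2 / (2 * (v : ℝ)) = -(2 * (v : ℝ))⁻¹ * x ^ 2 := by ring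
  rw [gaussianPDFReal, harg]

lemma hv_pos (hv : v ≠ 0) : (0 : ℝ) < v := by
  exact_mod_cast pos_iff_ne_zero.mpr hv

lemma sqrt_pi_div (hv : v ≠ 0) :
    Real.sqrt (π / (2 * (v : ℝ))⁻¹) = Real.sqrt (2 * π * v) := by
  have h := hv_pos hv
  congr 1
  field_simp

lemma lebesgue_sq (hv : v ≠ 0) :
    ∫ x : ℝ, gaussianPDFReal 0 v x * x ^ 2 = v := by
  have h := hv_pos hv
  have hc : (0 : ℝ) < (2 * (v : ℝ))⁻¹ := by positivity
  have heq : (fun x : ℝ => gaussianPDFReal 0 v x * x ^ 2)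
      = fun x => (Real.sqrt (2 * π * v))⁻¹
          * (x ^ 2 * Real.exp (-(2 * (v : ℝ))⁻¹ * x ^ 2)) := by
    ext x; rw [gaussianPDFReal_eq]; ring
  rw [heq, integral_const_mul, moment_two hc, sqrt_pi_div hv]
  have hs : (0 : ℝ) < Real.sqrt (2 * π * v) := Real.sqrt_pos.mpr (by positivity)
  field_simp

lemma lebesgue_four (hv : v ≠ 0) :
    ∫ x : ℝ, gaussianPDFReal 0 v x * x ^ 4 = 3 * (v : ℝ) ^ 2 := by
  have h := hv_pos hv
  have hc : (0 : ℝ) < (2 * (v : ℝ))⁻¹ := by positivity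
  have heq : (fun x : ℝ => gaussianPDFReal 0 v x * x ^ 4)
      = fun x => (Real.sqrt (2 * π * v))⁻¹
          * (x ^ 4 * Real.exp (-(2 * (v : ℝ))⁻¹ * x ^ 2)) := by
    ext x; rw [gaussianPDFReal_eq]; ring
  rw [heq, integral_const_mul, moment_four hc, sqrt_pi_div hv]
  have hs : (0 : ℝ) < Real.sqrt (2 * π * v) := Real.sqrt_pos.mpr (by positivity)
  field_simp

end GaussianRealMoments

end EulerProjAux

/-- Local error of the Euler-projected diffusion step on the unit circle: for a
centered Gaussian increment of variance `Δt`, the mean-squared angular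
displacement `⟨(arctan(b Δw))²⟩` satisfies
`b²Δt − 2b⁴Δt² ≤ ⟨Δθ_E²⟩ ≤ b²Δt`, so its error relative to the exact value
`b²Δt` is at most `2b⁴Δt²`. -/
theorem euler_projection_local_mean_square_error
    (b Δt : ℝ) (hΔt : 0 ≤ Δt) :
    (b ^ 2 * Δt - 2 * b ^ 4 * Δt ^ 2
        ≤ ∫ w : ℝ, Real.arctan (b * w) ^ 2 ∂(gaussianReal 0 Δt.toNNReal) ∧
      ∫ w : ℝ, Real.arctan (b * w) ^ 2 ∂(gaussianReal 0 Δt.toNNReal)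
        ≤ b ^ 2 * Δt) ∧
    |(∫ w : ℝ, Real.arctan (b * w) ^ 2 ∂(gaussianReal 0 Δt.toNNReal)) - b ^ 2 * Δt|
      ≤ 2 * b ^ 4 * Δt ^ 2 := by
  open EulerProjAux Real in
  suffices h : b ^ 2 * Δt - 2 * b ^ 4 * Δt ^ 2
        ≤ (∫ w : ℝ, Real.arctan (b * w) ^ 2 ∂(gaussianReal 0 Δt.toNNReal)) ∧
      (∫ w : ℝ, Real.arctan (b * w) ^ 2 ∂(gaussianReal 0 Δt.toNNReal)) ≤ b ^ 2 * Δt by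
    obtain ⟨h1, h2⟩ := h
    exact ⟨⟨h1, h2⟩, abs_le.mpr ⟨by linarith, by linarith⟩⟩
  by_cases hΔ : Δt = 0
  · subst hΔ
    simp [gaussianReal_zero_var, integral_dirac]
  · set v : ℝ≥0 := Δt.toNNReal with hv_def
    have hv : v ≠ 0 := by
      simp only [hv_def, ne_eq, Real.toNNReal_eq_zero, not_le]
      exact lt_of_le_of_ne hΔt (Ne.symm hΔ)
    have hvΔ : (v : ℝ) = Δt := Real.coe_toNNReal _ hΔt
    have hvpos : (0 : ℝ) < v := EulerProjAux.hv_pos hv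
    rw [EulerProjAux.integral_gaussianReal_eq hv]
    set pdf : ℝ → ℝ := gaussianPDFReal 0 v with hpdf_def
    have hpdf_nonneg : ∀ x, 0 ≤ pdf x := fun x => gaussianPDFReal_nonneg 0 v x
    have hc : (0 : ℝ) < (2 * (v : ℝ))⁻¹ := by positivity
    -- integrability facts
    have I2 : Integrable fun x : ℝ => pdf x * x ^ 2 := by
      have heq : (fun x : ℝ => pdf x * x ^ 2)
          = fun x => (Real.sqrt (2 * π * v))⁻¹
              * (x ^ 2 * Real.exp (-(2 * (v : ℝ))⁻¹ * x ^ 2)) := by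
        ext x; rw [hpdf_def, EulerProjAux.gaussianPDFReal_eq]; ring
      rw [heq]
      exact (EulerProjAux.integrable_pow_mul_gauss hc 2).const_mul _
    have I4 : Integrable fun x : ℝ => pdf x * x ^ 4 := by
      have heq : (fun x : ℝ => pdf x * x ^ 4)
          = fun x => (Real.sqrt (2 * π * v))⁻¹
              * (x ^ 4 * Real.exp (-(2 * (v : ℝ))⁻¹ * x ^ 2)) := by
        ext x; rw [hpdf_def, EulerProjAux.gaussianPDFReal_eq]; ring
      rw [heq]
      exact (EulerProjAux.integrable_pow_mul_gauss hc 4).const_mul _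
    have Ia : Integrable fun x : ℝ => pdf x * Real.arctan (b * x) ^ 2 := by
      apply Integrable.mono' ((integrable_gaussianPDFReal 0 v).mul_const ((π / 2) ^ 2))
      · exact ((measurable_gaussianPDFReal 0 v).mul
          ((Real.continuous_arctan.comp (continuous_const.mul continuous_id)).pow 2
            |>.measurable)).aestronglyMeasurable
      · refine Filter.Eventually.of_forall fun x => ?_
        have h1 : |Real.arctan (b * x)| ≤ π / 2 :=
          abs_le.mpr ⟨(Real.neg_pi_div_two_lt_arctan _).le, (Real.arctan_lt_pi_div_two _).le⟩
        have h2 : Real.arctan (b * x) ^ 2 ≤ (π / 2) ^ 2 := by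
          rw [← sq_abs]
          exact pow_le_pow_left₀ (abs_nonneg _) h1 2
        rw [Real.norm_eq_abs, abs_of_nonneg (mul_nonneg (hpdf_nonneg x) (sq_nonneg _))]
        exact mul_le_mul_of_nonneg_left h2 (hpdf_nonneg x)
    -- upper bound
    have hub : (∫ x : ℝ, pdf x * Real.arctan (b * x) ^ 2)
        ≤ ∫ x : ℝ, pdf x * (b ^ 2 * x ^ 2) := by
      apply integral_mono Ia
      · have heq : (fun x : ℝ => pdf x * (b ^ 2 * x ^ 2))
            = fun x => b ^ 2 * (pdf x * x ^ 2) := by ext x; ring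
        rw [heq]; exact I2.const_mul _
      · intro x
        have := EulerProjAux.arctan_sq_le (b * x)
        rw [mul_pow] at this
        exact mul_le_mul_of_nonneg_left this (hpdf_nonneg x)
    have hub_val : (∫ x : ℝ, pdf x * (b ^ 2 * x ^ 2)) = b ^ 2 * Δt := by
      have heq : (fun x : ℝ => pdf x * (b ^ 2 * x ^ 2))
          = fun x => b ^ 2 * (pdf x * x ^ 2) := by ext x; ring
      rw [heq, integral_const_mul, EulerProjAux.lebesgue_sq hv, hvΔ]
    -- lower bound
    have hlb : (∫ x : ℝ, pdf x * (b ^ 2 * x ^ 2 - 2 / 3 * b ^ 4 * x ^ 4))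
        ≤ ∫ x : ℝ, pdf x * Real.arctan (b * x) ^ 2 := by
      apply integral_mono _ Ia
      · intro x
        have h := EulerProjAux.sq_sub_arctan_sq_le (b * x)
        rw [mul_pow, mul_pow] at h
        have h2 : b ^ 2 * x ^ 2 - 2 / 3 * b ^ 4 * x ^ 4 ≤ Real.arctan (b * x) ^ 2 := by
          linarith
        exact mul_le_mul_of_nonneg_left h2 (hpdf_nonneg x)
      · have heq : (fun x : ℝ => pdf x * (b ^ 2 * x ^ 2 - 2 / 3 * b ^ 4 * x ^ 4))
            = fun x => b ^ 2 * (pdf x * x ^ 2) - 2 / 3 * b ^ 4 * (pdf x * x ^ 4) := by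
          ext x; ring
        rw [heq]
        exact (I2.const_mul _).sub (I4.const_mul _)
    have hlb_val : (∫ x : ℝ, pdf x * (b ^ 2 * x ^ 2 - 2 / 3 * b ^ 4 * x ^ 4))
        = b ^ 2 * Δt - 2 * b ^ 4 * Δt ^ 2 := by
      have heq : (fun x : ℝ => pdf x * (b ^ 2 * x ^ 2 - 2 / 3 * b ^ 4 * x ^ 4))
          = fun x => b ^ 2 * (pdf x * x ^ 2) - 2 / 3 * b ^ 4 * (pdf x * x ^ 4) := by
        ext x; ring
      rw [heq, integral_sub (I2.const_mul _) (I4.const_mul _),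
        integral_const_mul, integral_const_mul,
        EulerProjAux.lebesgue_sq hv, EulerProjAux.lebesgue_four hv, hvΔ]
      ring
    exact ⟨(le_of_eq hlb_val.symm).trans hlb, hub.trans (le_of_eq hub_val)⟩
end

section
/- Let (Ω, 𝔽, P) be a probability space, n ∈ ℕ, b ∈ ℝ, Δt ≥ 0, and let W_1, …, W_n : Ω → ℝ be independent random variables each distributed as a centered Gaussian with variance Δt. Then the mean-squared total angular displacement of the Euler-projected diffusion on the unit circle after n steps satisfies b²nΔt − 2b⁴nΔt² ≤ E[(Σ_{i=1}^n arctan(b W_i))²] ≤ b²nΔt. Equivalently, with t = nΔt, the global error of ⟨θ_E²⟩ relative to the exact value b²t is bounded by 2 t b⁴ Δt. -/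
open MeasureTheory ProbabilityTheory Real
open scoped NNReal ENNReal


lemma euler_aux_arctan_le_self {x : ℝ} (hx : 0 ≤ x) : Real.arctan x ≤ x := by
  have hd : ∀ y : ℝ, HasDerivAt (fun t : ℝ => t - Real.arctan t) (1 - 1/(1+y^2)) y :=
    fun y => (hasDerivAt_id y).sub (Real.hasDerivAt_arctan y)
  have hmono : Monotone (fun t : ℝ => t - Real.arctan t) := by
    refine monotone_of_deriv_nonneg (fun y => ((hd y).differentiableAt)) (fun y => ?_)
    rw [(hd y).deriv]
    have h1 : (0:ℝ) < 1 + y^2 := by positivity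
    have h2 : 1/(1+y^2) ≤ 1 := by
      rw [div_le_one h1]; nlinarith
    linarith
  have := hmono hx
  simpa [Real.arctan_zero] using this

lemma euler_aux_sub_le_arctan {x : ℝ} (hx : 0 ≤ x) : x - x^3/3 ≤ Real.arctan x := by
  have hd : ∀ y : ℝ, HasDerivAt (fun t : ℝ => Real.arctan t - (t - t^3/3))
      (1/(1+y^2) - (1 - (3:ℕ)*y^2/3)) y := by
    intro y
    exact (Real.hasDerivAt_arctan y).sub ((hasDerivAt_id y).sub ((hasDerivAt_pow 3 y).div_const 3))
  have hmono : Monotone (fun t : ℝ => Real.arctan t - (t - t^3/3)) := by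
    refine monotone_of_deriv_nonneg (fun y => ((hd y).differentiableAt)) (fun y => ?_)
    rw [(hd y).deriv]
    have h1 : (0:ℝ) < 1 + y^2 := by positivity
    have h2 : 1/(1+y^2) - (1 - (3:ℕ)*y^2/3) = y^4/(1+y^2) := by
      field_simp
      ring
    rw [h2]
    positivity
  have := hmono hx
  simp only [Real.arctan_zero] at this
  norm_num at this
  linarith

lemma euler_aux_arctan_sq_le (y : ℝ) : Real.arctan y ^ 2 ≤ y ^ 2 := by
  have hnn : ∀ z : ℝ, 0 ≤ z → 0 ≤ Real.arctan z := by
    intro z hz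
    simpa [Real.arctan_zero] using Real.arctan_strictMono.monotone hz
  have habs : |Real.arctan y| ≤ |y| := by
    rcases le_or_gt 0 y with hy | hy
    · rw [abs_of_nonneg (hnn y hy), abs_of_nonneg hy]
      exact euler_aux_arctan_le_self hy
    · have h1 : 0 ≤ Real.arctan (-y) := hnn _ (by linarith)
      rw [abs_of_neg hy, abs_of_nonpos (by rw [← neg_nonneg, ← Real.arctan_neg]; exact h1)]
      rw [← Real.arctan_neg]
      exact euler_aux_arctan_le_self (by linarith)
  calc Real.arctan y ^ 2 = |Real.arctan y| ^ 2 := (sq_abs _).symm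
    _ ≤ |y| ^ 2 := by gcongr
    _ = y ^ 2 := sq_abs _

lemma euler_aux_lower (y : ℝ) : y^2 - 2/3 * y^4 ≤ Real.arctan y ^ 2 := by
  suffices h : ∀ z : ℝ, 0 ≤ z → z^2 - 2/3 * z^4 ≤ Real.arctan z ^ 2 by
    rcases le_or_gt 0 y with hy | hy
    · exact h y hy
    · have := h (-y) (by linarith)
      have he : Real.arctan (-y) ^ 2 = Real.arctan y ^ 2 := by
        rw [Real.arctan_neg]; ring
      have he2 : (-y)^2 = y^2 := by ring
      have he4 : (-y)^4 = y^4 := by ring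
      rw [he, he2, he4] at this
      exact this
  intro z hz
  by_cases hz3 : z^2 ≤ 3
  · have h0 : 0 ≤ z - z^3/3 := by nlinarith
    have h1 : z - z^3/3 ≤ Real.arctan z := euler_aux_sub_le_arctan hz
    have h2 : (z - z^3/3)^2 ≤ Real.arctan z ^ 2 := by
      have := pow_le_pow_left₀ h0 h1 2
      exact this
    nlinarith [sq_nonneg (z^3)]
  · have : z^2 - 2/3*z^4 ≤ 0 := by nlinarith
    exact this.trans (sq_nonneg _)

lemma euler_aux_integrable_pow_gauss {c : ℝ} (hc : 0 < c) (k : ℕ) :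
    Integrable fun x : ℝ => x ^ k * Real.exp (-c * x ^ 2) := by
  have h := integrable_rpow_mul_exp_neg_mul_sq hc (s := (k:ℝ))
    (lt_of_lt_of_le neg_one_lt_zero (Nat.cast_nonneg k))
  simpa [Real.rpow_natCast] using h

lemma euler_aux_gauss_step {c : ℝ} (hc : 0 < c) (k : ℕ) :
    ∫ x : ℝ, x ^ (k+2) * Real.exp (-c * x ^ 2)
      = ((k+1) : ℝ) / (2*c) * ∫ x : ℝ, x ^ k * Real.exp (-c * x ^ 2) := by
  have hu : ∀ x : ℝ, HasDerivAt (fun x : ℝ => x ^ (k+1)) ((((k:ℝ)+1)) * x ^ k) x := by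
    intro x
    have := hasDerivAt_pow (k+1) x
    simpa [Nat.cast_add] using this
  have hv : ∀ x : ℝ, HasDerivAt (fun x : ℝ => -(2*c)⁻¹ * Real.exp (-c * x ^ 2))
      (x * Real.exp (-c * x ^ 2)) x := by
    intro x
    have h1 : HasDerivAt (fun x : ℝ => -c * x ^ 2) (-c * (2 * x)) x := by
      simpa using (HasDerivAt.const_mul (-c) (hasDerivAt_pow 2 x))
    have h2 := (h1.exp).const_mul (-(2*c)⁻¹)
    refine h2.congr_deriv ?_
    have h2c : (2*c)⁻¹ * (2*c) = 1 := inv_mul_cancel₀ (by positivity)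
    linear_combination (x * Real.exp (-c * x ^ 2)) * h2c
  have hint1 : Integrable ((fun x : ℝ => x ^ (k+1)) * fun x : ℝ => x * Real.exp (-c * x ^ 2)) := by
    refine (euler_aux_integrable_pow_gauss hc (k+2)).congr ?_
    filter_upwards with x
    simp [Pi.mul_apply]
    ring
  have hint2 : Integrable ((fun x : ℝ => (((k:ℝ)+1)) * x ^ k) *
      fun x : ℝ => -(2*c)⁻¹ * Real.exp (-c * x ^ 2)) := by
    refine (((euler_aux_integrable_pow_gauss hc k).const_mul ((((k:ℝ)+1)) * -(2*c)⁻¹)).congr ?_)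
    filter_upwards with x
    simp [Pi.mul_apply]
    ring
  have hint3 : Integrable ((fun x : ℝ => x ^ (k+1)) *
      fun x : ℝ => -(2*c)⁻¹ * Real.exp (-c * x ^ 2)) := by
    refine (((euler_aux_integrable_pow_gauss hc (k+1)).const_mul (-(2*c)⁻¹)).congr ?_)
    filter_upwards with x
    simp [Pi.mul_apply]
    ring
  have key := integral_mul_deriv_eq_deriv_mul_of_integrable (fun x _ => hu x) (fun x _ => hv x) hint1 hint2 hint3
  have hL : ∫ x : ℝ, x ^ (k+1) * (x * Real.exp (-c * x ^ 2))
      = ∫ x : ℝ, x ^ (k+2) * Real.exp (-c * x ^ 2) := by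
    congr 1; funext x; ring
  have hR : ∫ x : ℝ, (((k:ℝ)+1)) * x ^ k * (-(2*c)⁻¹ * Real.exp (-c * x ^ 2))
      = (((k:ℝ)+1)) * -(2*c)⁻¹ * ∫ x : ℝ, x ^ k * Real.exp (-c * x ^ 2) := by
    rw [← MeasureTheory.integral_const_mul]
    congr 1; funext x; ring
  rw [hL, hR] at key
  rw [key]
  field_simp

lemma euler_aux_integral_gaussianReal {v : ℝ≥0} (hv : v ≠ 0) (g : ℝ → ℝ) :
    ∫ x, g x ∂(gaussianReal 0 v) = ∫ x, gaussianPDFReal 0 v x * g x := by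
  rw [gaussianReal_of_var_ne_zero _ hv]
  have heq : gaussianPDF 0 v = fun x => ((Real.toNNReal (gaussianPDFReal 0 v x) : ℝ≥0) : ℝ≥0∞) :=
    rfl
  rw [heq, integral_withDensity_eq_integral_smul
    ((measurable_gaussianPDFReal 0 v).real_toNNReal) g]
  congr 1
  funext x
  rw [NNReal.smul_def, Real.coe_toNNReal _ (gaussianPDFReal_nonneg _ _ _)]
  rfl

lemma euler_aux_arctan_mean_zero (b : ℝ) (v : ℝ≥0) :
    ∫ x, Real.arctan (b * x) ∂(gaussianReal 0 v) = 0 := by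
  have hcont : Continuous fun x : ℝ => Real.arctan (b * x) :=
    Real.continuous_arctan.comp (continuous_const.mul continuous_id)
  have hmap : Measure.map (fun x : ℝ => (-1 : ℝ) * x) (gaussianReal 0 v) = gaussianReal 0 v := by
    rw [show (fun x : ℝ => (-1 : ℝ) * x) = ((-1 : ℝ) * ·) from rfl,
      gaussianReal_map_const_mul (-1 : ℝ)]
    have h1 : (⟨(-1 : ℝ)^2, sq_nonneg _⟩ : ℝ≥0) = 1 := by ext; norm_num
    rw [mul_zero]; congr 1; ext; simp
  have hkey : ∫ x, Real.arctan (b * x) ∂(gaussianReal 0 v)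
      = ∫ x, Real.arctan (b * ((-1 : ℝ) * x)) ∂(gaussianReal 0 v) := by
    conv_lhs => rw [← hmap]
    rw [integral_map (measurable_id'.const_mul (-1 : ℝ)).aemeasurable
      hcont.aestronglyMeasurable]
  have hneg : ∫ x, Real.arctan (b * ((-1 : ℝ) * x)) ∂(gaussianReal 0 v)
      = - ∫ x, Real.arctan (b * x) ∂(gaussianReal 0 v) := by
    rw [← integral_neg]
    congr 1
    funext x
    rw [show b * ((-1 : ℝ) * x) = -(b * x) by ring, Real.arctan_neg]
  rw [hneg] at hkey
  linarith

lemma euler_aux_arctan_sq_le_pi (y : ℝ) : Real.arctan y ^ 2 ≤ (π/2)^2 := by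
  have h1 : |Real.arctan y| ≤ π/2 :=
    le_of_lt (abs_lt.mpr ⟨Real.neg_pi_div_two_lt_arctan y, Real.arctan_lt_pi_div_two y⟩)
  calc Real.arctan y ^ 2 = |Real.arctan y| ^ 2 := (sq_abs _).symm
    _ ≤ (π/2)^2 := pow_le_pow_left₀ (abs_nonneg _) h1 2

lemma euler_aux_J_bounds (b : ℝ) (v : ℝ≥0) :
    b^2 * v - 2 * b^4 * (v:ℝ)^2 ≤ ∫ x, Real.arctan (b*x)^2 ∂(gaussianReal 0 v) ∧
    ∫ x, Real.arctan (b*x)^2 ∂(gaussianReal 0 v) ≤ b^2 * v := by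
  by_cases hv : v = 0
  · subst hv
    simp only [gaussianReal_zero_var, NNReal.coe_zero]
    rw [integral_dirac]
    norm_num
  · have hv0 : (0:ℝ) < (v:ℝ) := by
      have := zero_lt_iff.mpr hv
      exact_mod_cast this
    set c : ℝ := (2*(v:ℝ))⁻¹ with hc_def
    have hc : 0 < c := by positivity
    set K : ℝ := (Real.sqrt (2 * π * (v:ℝ)))⁻¹ with hK_def
    have hpdf : gaussianPDFReal 0 v = fun x => K * Real.exp (-c * x^2) := by
      funext x
      rw [gaussianPDFReal]
      rw [sub_zero]
      congr 1
      rw [hc_def]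
      field_simp
    have hI0 : ∫ x : ℝ, Real.exp (-c * x^2) = Real.sqrt (π / c) := integral_gaussian c
    have hI2 : ∫ x : ℝ, x^2 * Real.exp (-c * x^2) = 1/(2*c) * Real.sqrt (π / c) := by
      have h2 := euler_aux_gauss_step hc 0
      norm_num at h2
      simp only [neg_mul]
      rw [h2]
      simp only [← neg_mul]
      rw [hI0]
      ring
    have hI4 : ∫ x : ℝ, x^4 * Real.exp (-c * x^2)
        = 3/(2*c) * (1/(2*c)) * Real.sqrt (π / c) := by
      have h4 := euler_aux_gauss_step hc 2
      norm_num at h4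
      simp only [neg_mul]
      rw [h4]
      simp only [← neg_mul]
      rw [hI2]
      ring
    have hsqrt : K * Real.sqrt (π / c) = 1 := by
      rw [hK_def, show π / c = 2 * π * (v:ℝ) by rw [hc_def]; field_simp]
      exact inv_mul_cancel₀ (ne_of_gt (Real.sqrt_pos.mpr (by positivity)))
    have hcv : 1/(2*c) = (v:ℝ) := by rw [hc_def]; field_simp
    have E2 : ∫ x : ℝ, gaussianPDFReal 0 v x * x^2 = (v:ℝ) := by
      rw [hpdf, show (fun x : ℝ => K * Real.exp (-c * x^2) * x^2)
        = fun x : ℝ => K * (x^2 * Real.exp (-c * x^2)) by funext x; ring]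
      rw [integral_const_mul, hI2]
      calc K * (1/(2*c) * Real.sqrt (π / c)) = 1/(2*c) * (K * Real.sqrt (π / c)) := by ring
        _ = (v:ℝ) := by rw [hsqrt, hcv]; ring
    have E4 : ∫ x : ℝ, gaussianPDFReal 0 v x * x^4 = 3 * (v:ℝ)^2 := by
      rw [hpdf, show (fun x : ℝ => K * Real.exp (-c * x^2) * x^4)
        = fun x : ℝ => K * (x^4 * Real.exp (-c * x^2)) by funext x; ring]
      rw [integral_const_mul, hI4]
      calc K * (3/(2*c) * (1/(2*c)) * Real.sqrt (π / c))
          = 3 * ((1/(2*c)) * (1/(2*c))) * (K * Real.sqrt (π / c)) := by ring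
        _ = 3 * (v:ℝ)^2 := by rw [hsqrt, hcv]; ring
    have i2 : Integrable (fun x : ℝ => gaussianPDFReal 0 v x * x^2) := by
      rw [hpdf]
      refine ((euler_aux_integrable_pow_gauss hc 2).const_mul K).congr ?_
      filter_upwards with x
      ring
    have i4 : Integrable (fun x : ℝ => gaussianPDFReal 0 v x * x^4) := by
      rw [hpdf]
      refine ((euler_aux_integrable_pow_gauss hc 4).const_mul K).congr ?_
      filter_upwards with x
      ring
    have hmeasJ : Measurable (fun x : ℝ => gaussianPDFReal 0 v x * Real.arctan (b*x)^2) :=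
      (measurable_gaussianPDFReal 0 v).mul
        ((Real.measurable_arctan.comp (measurable_id'.const_mul b)).pow_const 2)
    have iJ : Integrable (fun x : ℝ => gaussianPDFReal 0 v x * Real.arctan (b*x)^2) := by
      refine Integrable.mono' ((integrable_gaussianPDFReal 0 v).mul_const ((π/2)^2))
        hmeasJ.aestronglyMeasurable (ae_of_all _ fun x => ?_)
      rw [Real.norm_eq_abs, abs_of_nonneg (mul_nonneg (gaussianPDFReal_nonneg _ _ _) (sq_nonneg _))]
      exact mul_le_mul_of_nonneg_left (euler_aux_arctan_sq_le_pi (b*x))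
        (gaussianPDFReal_nonneg _ _ _)
    have iup : Integrable (fun x : ℝ => gaussianPDFReal 0 v x * (b^2*x^2)) := by
      refine (i2.const_mul (b^2)).congr ?_
      filter_upwards with x
      ring
    have ilow : Integrable (fun x : ℝ => gaussianPDFReal 0 v x * (b^2*x^2 - 2/3*b^4*x^4)) := by
      refine ((i2.const_mul (b^2)).sub (i4.const_mul (2/3*b^4))).congr ?_
      filter_upwards with x
      simp only [Pi.sub_apply]
      ring
    have Eup : ∫ x : ℝ, gaussianPDFReal 0 v x * (b^2*x^2) = b^2 * (v:ℝ) := by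
      rw [show (fun x : ℝ => gaussianPDFReal 0 v x * (b^2*x^2))
        = fun x : ℝ => b^2 * (gaussianPDFReal 0 v x * x^2) by funext x; ring]
      rw [integral_const_mul, E2]
    have Elow : ∫ x : ℝ, gaussianPDFReal 0 v x * (b^2*x^2 - 2/3*b^4*x^4)
        = b^2 * (v:ℝ) - 2 * b^4 * (v:ℝ)^2 := by
      rw [show (fun x : ℝ => gaussianPDFReal 0 v x * (b^2*x^2 - 2/3*b^4*x^4))
        = fun x : ℝ => b^2 * (gaussianPDFReal 0 v x * x^2)
            - 2/3*b^4 * (gaussianPDFReal 0 v x * x^4) by funext x; ring]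
      rw [integral_sub (i2.const_mul (b^2)) (i4.const_mul (2/3*b^4)),
        integral_const_mul, integral_const_mul, E2, E4]
      ring
    rw [euler_aux_integral_gaussianReal hv]
    constructor
    · rw [← Elow]
      refine integral_mono ilow iJ fun x => ?_
      refine mul_le_mul_of_nonneg_left ?_ (gaussianPDFReal_nonneg _ _ _)
      have := euler_aux_lower (b*x)
      nlinarith [this]
    · rw [← Eup]
      refine integral_mono iJ iup fun x => ?_
      refine mul_le_mul_of_nonneg_left ?_ (gaussianPDFReal_nonneg _ _ _)
      have := euler_aux_arctan_sq_le (b*x)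
      nlinarith [this]

/-- Global error of the Euler-projected diffusion on the unit circle: after `n`
steps with independent centered Gaussian increments of variance `Δt`, the
mean-squared total angle `E[(∑ᵢ arctan(b Wᵢ))²]` satisfies
`b²nΔt − 2b⁴nΔt² ≤ E[θ_E²] ≤ b²nΔt`; equivalently, with `t = nΔt`, the error
relative to `b²t` is bounded by `2 t b⁴ Δt`. -/
theorem euler_projection_global_mean_square_error
    {Ω : Type*} [MeasurableSpace Ω] (P : Measure Ω) [IsProbabilityMeasure P]
    (n : ℕ) (b Δt : ℝ) (hΔt : 0 ≤ Δt)
    (W : Fin n → Ω → ℝ)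
    (hmeas : ∀ i, Measurable (W i))
    (hindep : iIndepFun W P)
    (hgauss : ∀ i, Measure.map (W i) P = gaussianReal 0 Δt.toNNReal) :
    (b ^ 2 * n * Δt - 2 * b ^ 4 * n * Δt ^ 2
        ≤ ∫ ω, (∑ i, Real.arctan (b * W i ω)) ^ 2 ∂P ∧
      ∫ ω, (∑ i, Real.arctan (b * W i ω)) ^ 2 ∂P ≤ b ^ 2 * n * Δt) ∧
    |(∫ ω, (∑ i, Real.arctan (b * W i ω)) ^ 2 ∂P) - b ^ 2 * (n * Δt)|
      ≤ 2 * (n * Δt) * b ^ 4 * Δt := by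
  set v : ℝ≥0 := Δt.toNNReal with hv_def
  have hvΔ : (v : ℝ) = Δt := Real.coe_toNNReal _ hΔt
  set f : Fin n → Ω → ℝ := fun i ω => Real.arctan (b * W i ω) with hf_def
  have hg : Measurable fun x : ℝ => Real.arctan (b * x) :=
    Real.measurable_arctan.comp (measurable_id'.const_mul b)
  have hfm : ∀ i, Measurable (f i) := fun i => hg.comp (hmeas i)
  have habs : ∀ i ω, |f i ω| ≤ Real.pi / 2 := fun i ω =>
    le_of_lt (abs_lt.mpr ⟨Real.neg_pi_div_two_lt_arctan _, Real.arctan_lt_pi_div_two _⟩)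
  have hfint : ∀ i, Integrable (f i) P := fun i =>
    Integrable.mono' (integrable_const (Real.pi / 2)) (hfm i).aestronglyMeasurable
      (ae_of_all _ fun ω => by simpa [Real.norm_eq_abs] using habs i ω)
  have hprod : ∀ i j, Integrable (fun ω => f i ω * f j ω) P := by
    intro i j
    refine Integrable.mono' (integrable_const (Real.pi / 2 * (Real.pi / 2)))
      ((hfm i).mul (hfm j)).aestronglyMeasurable (ae_of_all _ fun ω => ?_)
    rw [Real.norm_eq_abs, abs_mul]
    exact mul_le_mul (habs i ω) (habs j ω) (abs_nonneg _)
      (le_of_lt (by positivity : (0:ℝ) < Real.pi / 2))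
  -- mean zero
  have hmean : ∀ i, ∫ ω, f i ω ∂P = 0 := by
    intro i
    have h1 : ∫ ω, f i ω ∂P = ∫ x, Real.arctan (b * x) ∂(Measure.map (W i) P) :=
      (integral_map (hmeas i).aemeasurable
        (hg.aestronglyMeasurable)).symm
    rw [h1, hgauss i]
    exact euler_aux_arctan_mean_zero b v
  -- second moment of each term
  have hsq : ∀ i, ∫ ω, f i ω ^ 2 ∂P = ∫ x, Real.arctan (b*x)^2 ∂(gaussianReal 0 v) := by
    intro i
    have h1 : ∫ ω, f i ω ^ 2 ∂P
        = ∫ x, Real.arctan (b * x) ^ 2 ∂(Measure.map (W i) P) :=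
      (integral_map (hmeas i).aemeasurable
        ((hg.pow_const 2).aestronglyMeasurable)).symm
    rw [h1, hgauss i]
  -- cross terms vanish
  have hcross : ∀ i j, i ≠ j → ∫ ω, f i ω * f j ω ∂P = 0 := by
    intro i j hij
    have hind : IndepFun (f i) (f j) P := (hindep.indepFun hij).comp hg hg
    have := hind.integral_mul_eq_mul_integral (hfint i).aestronglyMeasurable (hfint j).aestronglyMeasurable
    have h2 : ∫ ω, f i ω * f j ω ∂P = integral P (f i * f j) := rfl
    rw [h2, this, hmean i, hmean j]
    ring
  -- expansion
  have hexp : ∫ ω, (∑ i, f i ω) ^ 2 ∂P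
      = ∑ i : Fin n, ∑ j : Fin n, ∫ ω, f i ω * f j ω ∂P := by
    have h1 : ∀ ω, (∑ i, f i ω) ^ 2 = ∑ i : Fin n, ∑ j : Fin n, f i ω * f j ω := by
      intro ω
      rw [sq, Finset.sum_mul_sum]
    simp_rw [h1]
    rw [integral_finset_sum _ (fun i _ => integrable_finset_sum _ (fun j _ => hprod i j))]
    exact Finset.sum_congr rfl fun i _ =>
      integral_finset_sum _ (fun j _ => hprod i j)
  have htot : ∫ ω, (∑ i, f i ω) ^ 2 ∂P
      = (n : ℝ) * ∫ x, Real.arctan (b*x)^2 ∂(gaussianReal 0 v) := by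
    rw [hexp]
    have hdiag : ∀ i : Fin n, ∑ j : Fin n, ∫ ω, f i ω * f j ω ∂P
        = ∫ x, Real.arctan (b*x)^2 ∂(gaussianReal 0 v) := by
      intro i
      rw [Finset.sum_eq_single_of_mem i (Finset.mem_univ i)
        (fun j _ hji => hcross i j (fun h => hji h.symm))]
      rw [← hsq i]
      congr 1
      funext ω
      ring
    rw [Finset.sum_congr rfl fun i _ => hdiag i]
    simp [Finset.card_univ]
  obtain ⟨hJ1, hJ2⟩ := euler_aux_J_bounds b v
  rw [hvΔ] at hJ1 hJ2
  have hn : (0:ℝ) ≤ (n:ℝ) := Nat.cast_nonneg n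
  have hT : ∫ ω, (∑ i, Real.arctan (b * W i ω)) ^ 2 ∂P
      = (n : ℝ) * ∫ x, Real.arctan (b*x)^2 ∂(gaussianReal 0 v) := htot
  rw [hT]
  set J : ℝ := ∫ x, Real.arctan (b*x)^2 ∂(gaussianReal 0 v) with hJ_def
  constructor
  · constructor
    · nlinarith [mul_le_mul_of_nonneg_left hJ1 hn]
    · nlinarith [mul_le_mul_of_nonneg_left hJ2 hn]
  · rw [abs_le]
    constructor
    · nlinarith [mul_le_mul_of_nonneg_left hJ1 hn]
    · nlinarith [mul_le_mul_of_nonneg_left hJ2 hn, sq_nonneg b, sq_nonneg (b^2), mul_nonneg (mul_nonneg hn hΔt) hΔt]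
end
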